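/- If f : ℝⁿ × V → ℝ is a learnable vertex filter, differentiable in the parameter vector θ for each vertex of a finite complex K, the values f(θ₀, v) are pairwise distinct across vertices at θ₀, and s : ℝ² → ℝ is differentiable, then θ ↦ V(ph_k^f(θ, K)) is differentiable at θ₀, where near θ₀ it equals θ ↦ Σ_{i<j} μ_k^{i,j}(θ₀) · s(f(θ, v_{π(i)}), f(θ, v_{π(j)})) for the sorting permutation π at θ₀ and the (locally constant) barcode multiplicities μ_k^{i,j}(θ₀). -/

import Mathlib

open Finset

/-- A (finite, abstract) simplicial complex over vertex type `V`:
a set of nonempty finite subsets of `V` closed under taking nonempty subsets. -/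
def IsSimplicialComplex {V : Type*} (K : Set (Finset V)) : Prop :=
  ∅ ∉ K ∧ ∀ σ ∈ K, ∀ τ ⊆ σ, τ.Nonempty → τ ∈ K

/-- The simplicial boundary operator over `ZMod 2` on the free module spanned by all
finite subsets of `V`: a simplex of dimension `≥ 1` is sent to the formal sum of its
codimension-one faces, a vertex is sent to `0`. -/
noncomputable def bdry (V : Type*) [Fintype V] [DecidableEq V] :
    (Finset V → ZMod 2) →ₗ[ZMod 2] (Finset V → ZMod 2) :=
  ∑ σ : Finset V, (LinearMap.proj σ).smulRight
      (if 2 ≤ σ.card then ∑ v ∈ σ, Pi.single (σ.erase v) (1 : ZMod 2) else 0)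

open Classical in
/-- The space of `k`-chains over `ZMod 2` of a set `S` of simplices: chains supported on
the `k`-dimensional simplices (cardinality `k+1`) belonging to `S`. -/
noncomputable def chains {V : Type*} [Fintype V] [DecidableEq V]
    (S : Set (Finset V)) (k : ℕ) : Submodule (ZMod 2) (Finset V → ZMod 2) :=
  Submodule.pi Set.univ
    (fun σ => if σ ∈ S ∧ σ.card = k + 1 then (⊤ : Submodule (ZMod 2) (ZMod 2)) else ⊥)

/-- The `k`-cycles of `S`: kernel of the `k`-th boundary operator of `S`. -/
noncomputable def cyclesSub {V : Type*} [Fintype V] [DecidableEq V]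
    (S : Set (Finset V)) (k : ℕ) : Submodule (ZMod 2) (Finset V → ZMod 2) :=
  chains S k ⊓ LinearMap.ker (bdry V)

/-- The `k`-boundaries of `S`: image of the `(k+1)`-st boundary operator of `S`. -/
noncomputable def boundariesSub {V : Type*} [Fintype V] [DecidableEq V]
    (S : Set (Finset V)) (k : ℕ) : Submodule (ZMod 2) (Finset V → ZMod 2) :=
  Submodule.map (bdry V) (chains S (k + 1))

/-- The persistent Betti number `β_k^{i,j}` of a pair of complexes `Ki ⊆ Kj`:
the rank of `H_k^{i,j} = ker ∂_k^i / (im ∂_{k+1}^j ∩ ker ∂_k^i)`. -/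
noncomputable def pBetti {V : Type*} [Fintype V] [DecidableEq V]
    (Ki Kj : Set (Finset V)) (k : ℕ) : ℕ :=
  Module.finrank (ZMod 2)
    (↥(cyclesSub Ki k) ⧸ Submodule.comap (cyclesSub Ki k).subtype (boundariesSub Kj k))


/-- The persistent Betti number `β_k^{i,j}` of a filtration `Kc`, as an integer. -/
noncomputable def pB {V : Type*} [Fintype V] [DecidableEq V]
    (Kc : ℕ → Set (Finset V)) (k i j : ℕ) : ℤ :=
  pBetti (Kc i) (Kc j) k

/-- The multiplicity `μ_k^{i,j} = (β_k^{i,j−1} − β_k^{i,j}) − (β_k^{i−1,j−1} − β_k^{i−1,j})`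
of the barcode point `(a_i, a_j)`. -/
noncomputable def mult {V : Type*} [Fintype V] [DecidableEq V]
    (Kc : ℕ → Set (Finset V)) (k i j : ℕ) : ℤ :=
  (pB Kc k i (j - 1) - pB Kc k i j) - (pB Kc k (i - 1) (j - 1) - pB Kc k (i - 1) j)

/-- The multiplicity `μ_k^{i,∞} = β_k^{i,m} − β_k^{i−1,m}` of the essential barcode point
with birth index `i`. -/
noncomputable def multInf {V : Type*} [Fintype V] [DecidableEq V]
    (Kc : ℕ → Set (Finset V)) (k m i : ℕ) : ℤ :=
  pB Kc k i m - pB Kc k (i - 1) m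

/-- The rank of a vertex `v` under the filter `g`: the number of vertices `u` with
`g u ≤ g v`. -/
noncomputable def vrank {V : Type*} [Fintype V] (g : V → ℝ) (v : V) : ℕ :=
  (Finset.univ.filter fun u => g u ≤ g v).card

/-- The `i`-th complex of the sublevel set filtration of `K` induced by the vertex filter `g`
(described via vertex ranks): for injective `g` this is
`K^{g,i} = {σ ∈ K : max_{v ∈ σ} g v ≤ a_i}` for the sorted values `a_1 < ... < a_n` of `g`. -/
noncomputable def sublevelCplx {n : ℕ} (K : Set (Finset (Fin n))) (g : Fin n → ℝ) (i : ℕ) :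
    Set (Finset (Fin n)) :=
  {σ ∈ K | ∀ v ∈ σ, vrank g v ≤ i}

/-- The `i`-th smallest filter value `a_i` of `g` (indexed from `1`). -/
noncomputable def sortedVal {n : ℕ} (g : Fin n → ℝ) (i : ℕ) : ℝ :=
  ((Finset.univ.image g).sort (· ≤ ·)).getD (i - 1) 0

/-- The barcode coordinate function `V` applied to the `k`-dimensional persistence barcode of
the sublevel set filtration of `K` induced by `v ↦ f θ v`: the sum, over barcode points
`(a_i, a_j)` counted with multiplicity `μ_k^{i,j}(θ)`, of the structure element `s`. -/
noncomputable def Vph {n d : ℕ} (K : Set (Finset (Fin n))) (s : ℝ × ℝ → ℝ) (k : ℕ)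
    (f : (Fin d → ℝ) → Fin n → ℝ) (θ : Fin d → ℝ) : ℝ :=
  ∑ i ∈ Finset.Icc 1 n, ∑ j ∈ Finset.Icc (i + 1) n,
    ((mult (sublevelCplx K (f θ)) k i j : ℤ) : ℝ) * s (sortedVal (f θ) i, sortedVal (f θ) j)

/-! Since the values `f θ₀ v` are distinct, continuity keeps every strict comparison
`f θ₀ u < f θ₀ v` valid on a neighbourhood of `θ₀`. There the vertex order of `f θ` is that of
`f θ₀`, so the sublevel filtration and its multiplicities are those at `θ₀`, and
the `i`-th sorted value is `f θ (π i)`. Hence `Vph` agrees near `θ₀` with a finite sum of the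
differentiable functions `θ ↦ s (f θ (π i), f θ (π j))`. -/

open Filter Topology

theorem sum_Icc_succ_eq_sum_fin {M : Type*} [AddCommMonoid M] (m n : ℕ) (G : ℕ → M) :
    ∑ a ∈ Icc (m + 1) n, G a = ∑ a ∈ univ.filter (fun a : Fin n => m ≤ (a : ℕ)), G (a + 1) := by
  have hfilter : (range n).filter (m ≤ ·) = Ico m n := by ext; simp; omega
  rw [sum_filter, Fin.sum_univ_eq_sum_range (fun a => if m ≤ a then G (a + 1) else 0),
    ← sum_filter, hfilter, sum_Ico_add', Ico_add_one_right_eq_Icc]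

theorem sum_Icc_one_Icc_succ_eq_sum_fin_lt {M : Type*} [AddCommMonoid M] (n : ℕ)
    (F : ℕ → ℕ → M) :
    ∑ i ∈ Icc 1 n, ∑ j ∈ Icc (i + 1) n, F i j
      = ∑ i : Fin n, ∑ j ∈ univ.filter (fun j => i < j), F (i + 1) (j + 1) := by
  rw [sum_Icc_succ_eq_sum_fin, filter_true_of_mem fun _ _ => Nat.zero_le _]
  refine sum_congr rfl fun i _ => ?_
  rw [sum_Icc_succ_eq_sum_fin]
  exact sum_congr (filter_congr fun j _ => by omega) fun _ _ => rfl

theorem lt_iff_lt_of_lt_imp_lt {ι α β : Type*} [LinearOrder α] [LinearOrder β] {g : ι → α}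
    {g' : ι → β} (hinj : Function.Injective g') (h : ∀ u v, g' u < g' v → g u < g v) (u v : ι) :
    g u < g v ↔ g' u < g' v := by
  refine ⟨fun huv => ?_, h u v⟩
  rcases lt_trichotomy (g' u) (g' v) with hlt | heq | hgt
  · exact hlt
  · exact absurd huv (by rw [hinj heq]; exact lt_irrefl _)
  · exact absurd (h v u hgt) huv.not_gt

theorem eventually_lt_of_lt {X ι : Type*} [TopologicalSpace X] [Finite ι] {f : X → ι → ℝ}
    {x₀ : X} (hf : ∀ v, ContinuousAt (fun x => f x v) x₀) :
    ∀ᶠ x in 𝓝 x₀, ∀ u v, f x₀ u < f x₀ v → f x u < f x v := by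
  simp only [eventually_all]
  exact fun u v h => (hf u).eventually_lt (hf v) h

theorem vrank_congr {ι : Type*} [Fintype ι] {g g' : ι → ℝ}
    (h : ∀ u v, g u < g v ↔ g' u < g' v) : vrank g = vrank g' := by
  funext v
  unfold vrank
  congr 1
  ext u
  simp only [mem_filter, ← not_lt, h]

theorem sublevelCplx_congr {n : ℕ} (K : Set (Finset (Fin n))) {g g' : Fin n → ℝ}
    (h : ∀ u v, g u < g v ↔ g' u < g' v) : sublevelCplx K g = sublevelCplx K g' := by
  unfold sublevelCplx
  rw [vrank_congr h]

theorem sortedVal_succ_of_strictMono {n : ℕ} (g : Fin n → ℝ) (π : Equiv.Perm (Fin n))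
    (hπ : StrictMono (g ∘ π)) (i : Fin n) :
    sortedVal g ((i : ℕ) + 1) = g (π i) := by
  have hsort : (univ.image g).sort (· ≤ ·) = List.ofFn (g ∘ π) := by
    refine List.Perm.eq_of_pairwise' (pairwise_sort _ _) hπ.monotone.sortedLE_ofFn.pairwise ?_
    refine List.perm_of_nodup_nodup_toFinset_eq (sort_nodup _ _)
      (List.nodup_ofFn.mpr hπ.injective) ?_
    ext a
    simp [π.surjective.exists (p := fun v => g v = a)]
  simp [sortedVal, hsort]

section Vph

variable {n d : ℕ} (K : Set (Finset (Fin n))) (s : ℝ × ℝ → ℝ) (k : ℕ)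
  (f : (Fin d → ℝ) → Fin n → ℝ) {θ₀ : Fin d → ℝ} (π : Equiv.Perm (Fin n))

theorem Vph_eq_of_lt_iff_lt (hπ : StrictMono (f θ₀ ∘ π)) {θ : Fin d → ℝ}
    (h : ∀ u v, f θ u < f θ v ↔ f θ₀ u < f θ₀ v) :
    Vph K s k f θ =
      ∑ i : Fin n, ∑ j ∈ univ.filter (fun j => i < j),
        ((mult (sublevelCplx K (f θ₀)) k (i + 1) (j + 1) : ℤ) : ℝ) * s (f θ (π i), f θ (π j)) := by
  have hπθ : StrictMono (f θ ∘ π) := fun i j hij => (h _ _).2 (hπ hij)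
  rw [Vph, sublevelCplx_congr K h, sum_Icc_one_Icc_succ_eq_sum_fin_lt]
  simp only [sortedVal_succ_of_strictMono _ π hπθ]

theorem Vph_eventuallyEq (hf : ∀ v, ContinuousAt (fun θ => f θ v) θ₀)
    (hinj : Function.Injective (f θ₀)) (hπ : StrictMono (f θ₀ ∘ π)) :
    Vph K s k f =ᶠ[𝓝 θ₀] fun θ =>
      ∑ i : Fin n, ∑ j ∈ univ.filter (fun j => i < j),
        ((mult (sublevelCplx K (f θ₀)) k (i + 1) (j + 1) : ℤ) : ℝ) * s (f θ (π i), f θ (π j)) :=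
  (eventually_lt_of_lt hf).mono fun _ h =>
    Vph_eq_of_lt_iff_lt K s k f π hπ (lt_iff_lt_of_lt_imp_lt hinj h)

end Vph

theorem graph_filtration_learning_lemma1_general
    (n d : ℕ) (K : Set (Finset (Fin n))) (k : ℕ)
    (f : (Fin d → ℝ) → Fin n → ℝ) (θ₀ : Fin d → ℝ)
    (hdiff : ∀ v : Fin n, DifferentiableAt ℝ (fun θ => f θ v) θ₀)
    (hdist : Function.Injective (f θ₀))
    (s : ℝ × ℝ → ℝ) (hs : Differentiable ℝ s) :
    DifferentiableAt ℝ (Vph K s k f) θ₀ ∧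
    ∃ π : Equiv.Perm (Fin n), StrictMono (fun i => f θ₀ (π i)) ∧
      ∀ᶠ θ in nhds θ₀,
        Vph K s k f θ =
          ∑ i : Fin n, ∑ j ∈ Finset.univ.filter (fun j => i < j),
            ((mult (sublevelCplx K (f θ₀)) k ((i : ℕ) + 1) ((j : ℕ) + 1) : ℤ) : ℝ)
              * s (f θ (π i), f θ (π j)) := by
  let π := Tuple.sort (f θ₀)
  have hπ : StrictMono (f θ₀ ∘ π) :=
    (Tuple.monotone_sort _).strictMono_of_injective (hdist.comp π.injective)
  have hev := Vph_eventuallyEq K s k f π (fun v => (hdiff v).continuousAt) hdist hπ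
  exact ⟨hev.differentiableAt_iff.mpr (by fun_prop), π, hπ, hev⟩

/-- **Lemma 1 of the paper, multi-parameter form.** If `f : ℝⁿ × V → ℝ` is a
learnable vertex filter, differentiable in the parameter `θ` for each vertex of the finite
complex `K`, the vertex filter values at `θ₀` are pairwise distinct, and `s : ℝ² → ℝ` is
differentiable (vanishing on the diagonal), then `θ ↦ V(ph_k^f(θ, K))` is differentiable at
`θ₀`; moreover, near `θ₀` it equals
`θ ↦ Σ_{i<j} μ_k^{i,j}(θ₀) · s (f θ (π i), f θ (π j))` for the sorting permutation `π` at `θ₀`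
and the locally constant barcode multiplicities `μ_k^{i,j}(θ₀)`. -/
theorem graph_filtration_learning_lemma1
    (n d : ℕ) (K : Set (Finset (Fin n))) (hK : IsSimplicialComplex K) (k : ℕ)
    (f : (Fin d → ℝ) → Fin n → ℝ) (θ₀ : Fin d → ℝ)
    (hdiff : ∀ v : Fin n, DifferentiableAt ℝ (fun θ => f θ v) θ₀)
    (hdist : Function.Injective (f θ₀))
    (s : ℝ × ℝ → ℝ) (hs : Differentiable ℝ s) (hs0 : ∀ x : ℝ, s (x, x) = 0) :
    DifferentiableAt ℝ (Vph K s k f) θ₀ ∧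
    ∃ π : Equiv.Perm (Fin n), StrictMono (fun i => f θ₀ (π i)) ∧
      ∀ᶠ θ in nhds θ₀,
        Vph K s k f θ =
          ∑ i : Fin n, ∑ j ∈ Finset.univ.filter (fun j => i < j),
            ((mult (sublevelCplx K (f θ₀)) k ((i : ℕ) + 1) ((j : ℕ) + 1) : ℤ) : ℝ)
              * s (f θ (π i), f θ (π j)) :=
  graph_filtration_learning_lemma1_general n d K k f θ₀ hdiff hdist s hs
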